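/- Let G be a graph with n vertices and x·n²/2 edges for some real x ∈ [0,1]. Then there exists a vertex v of G such that e(v) ≥ d(v)²/2 + (1−4x+3x²)n²/4 − (1−x)³n³/(4(n−d(v))). -/

import Mathlib

/-!
For adjacent `a` and `v`, `N(a) ∪ N(v)` has at most `n` vertices, so
`d(a) + d(v) ≤ |N(a) ∩ N(v)| + n`; summing over ordered edges gives Goodman's inequality
`∑ d(v)² ≤ ∑ e(v) + n |E|`. Summing the claimed bound over all vertices, Cauchy–Schwarz
(`∑ d(v)² ≥ x² n³`) and AM–HM (`∑ 1/(n − d(v)) ≥ 1/(1 − x)`) show that it is at most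
`∑ e(v)`, so some vertex satisfies it.
-/

open Finset

theorem Finset.sq_card_le_sum_mul_sum_one_div {ι R : Type*} [Field R] [LinearOrder R]
    [IsStrictOrderedRing R] (s : Finset ι) {g : ι → R} (hg : ∀ i ∈ s, 0 < g i) :
    (#s : R) ^ 2 ≤ (∑ i ∈ s, g i) * ∑ i ∈ s, 1 / g i := by
  rcases s.eq_empty_or_nonempty with rfl | hs
  · simp
  have := sq_sum_div_le_sum_sq_div s 1 hg
  simp only [Pi.one_apply, sum_const, nsmul_eq_mul, mul_one, one_pow] at this
  rwa [div_le_iff₀' (sum_pos hg hs)] at this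

namespace SimpleGraph

variable {V : Type*} [Fintype V] (G : SimpleGraph V) [DecidableRel G.Adj]

theorem sum_sum_neighborFinset {M : Type*} [AddCommMonoid M] (f : V → M) :
    ∑ v, ∑ a ∈ G.neighborFinset v, f a = ∑ a, G.degree a • f a := by
  rw [sum_comm' (t' := univ) (s' := fun a => G.neighborFinset a) (by simp [adj_comm])]
  simp [card_neighborFinset_eq_degree]

theorem two_mul_ncard_edgeSet_induce_neighborSet [DecidableEq V] (v : V) :
    2 * (G.induce (G.neighborSet v)).edgeSet.ncard =
      ∑ a ∈ G.neighborFinset v, #(G.neighborFinset a ∩ G.neighborFinset v) := by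
  rw [← coe_edgeFinset, Set.ncard_coe_finset, ← sum_degrees_eq_twice_card_edges,
    sum_subtype (p := (· ∈ G.neighborSet v)) _ (fun a => by simp)]
  refine sum_congr rfl fun a _ => ?_
  rw [← card_neighborFinset_eq_degree, ← card_map, map_neighborFinset_induce]
  congr 2

theorem sum_degree_sq_le [DecidableEq V] :
    ∑ v, G.degree v ^ 2 ≤
      ∑ v, (G.induce (G.neighborSet v)).edgeSet.ncard + Fintype.card V * #G.edgeFinset := by
  have hpair : ∀ v, ∀ a ∈ G.neighborFinset v, G.degree a + G.degree v ≤
      #(G.neighborFinset a ∩ G.neighborFinset v) + Fintype.card V := by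
    intro v a _
    rw [← card_neighborFinset_eq_degree, ← card_neighborFinset_eq_degree,
      ← card_inter_add_card_union]
    gcongr
    exact card_le_univ _
  have := sum_le_sum fun v (_ : v ∈ univ) => sum_le_sum (hpair v)
  simp only [sum_add_distrib, sum_const, smul_eq_mul, sum_sum_neighborFinset,
    ← two_mul_ncard_edgeSet_induce_neighborSet, card_neighborFinset_eq_degree] at this
  rw [← sum_mul, sum_degrees_eq_twice_card_edges, ← mul_sum] at this
  simp only [sq]
  linarith

end SimpleGraph

theorem exists_le_of_sum_sq_sub_le {ι : Type*} [Fintype ι] [Nonempty ι] {n : ℕ}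
    (hn : Fintype.card ι = n) (d e : ι → ℝ) (x : ℝ) (hd : ∀ i, d i < n)
    (hsum : ∑ i, d i = x * n ^ 2) (hgood : ∑ i, d i ^ 2 - x * n ^ 3 / 2 ≤ ∑ i, e i) :
    ∃ i, d i ^ 2 / 2 + (1 - 4 * x + 3 * x ^ 2) * n ^ 2 / 4 -
      (1 - x) ^ 3 * n ^ 3 / (4 * (n - d i)) ≤ e i := by
  have hn0 : (0 : ℝ) < n := by
    rw [← hn]; exact_mod_cast Fintype.card_pos
  have hcs : x ^ 2 * n ^ 3 ≤ ∑ i, d i ^ 2 := by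
    have := sq_sum_le_card_mul_sum_sq (s := univ) (f := d)
    rw [card_univ, hn, hsum] at this
    nlinarith
  have hgap : ∑ i, ((n : ℝ) - d i) = (1 - x) * n ^ 2 := by
    rw [sum_sub_distrib, sum_const, card_univ, hn, hsum, nsmul_eq_mul]
    ring
  have hamhm : 1 ≤ (1 - x) * ∑ i, 1 / ((n : ℝ) - d i) := by
    have := sq_card_le_sum_mul_sum_one_div univ fun i _ => sub_pos.2 (hd i)
    rw [card_univ, hn, hgap] at this
    exact le_of_mul_le_mul_left (by linarith : (n : ℝ) ^ 2 * 1 ≤ n ^ 2 * _) (by positivity)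
  have hsplit : ∑ i, (d i ^ 2 / 2 + (1 - 4 * x + 3 * x ^ 2) * n ^ 2 / 4 -
      (1 - x) ^ 3 * n ^ 3 / (4 * (n - d i))) = (∑ i, d i ^ 2) / 2 +
        (1 - 4 * x + 3 * x ^ 2) * n ^ 3 / 4 - (1 - x) ^ 3 * n ^ 3 / 4 * ∑ i, 1 / ((n : ℝ) - d i) := by
    simp only [sum_sub_distrib, sum_add_distrib, sum_const, card_univ, hn, nsmul_eq_mul, mul_sum,
      sum_div]
    congr 1
    · ring
    · exact sum_congr rfl fun i _ => by field_simp
  have hcube : (1 - x) ^ 2 * n ^ 3 ≤ (1 - x) ^ 3 * n ^ 3 * ∑ i, 1 / ((n : ℝ) - d i) := by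
    nlinarith [mul_le_mul_of_nonneg_left hamhm (by positivity : (0 : ℝ) ≤ (1 - x) ^ 2 * n ^ 3)]
  obtain ⟨i, -, hi⟩ := exists_le_of_sum_le univ_nonempty (hsplit ▸ (by linarith) :
    ∑ i, (d i ^ 2 / 2 + (1 - 4 * x + 3 * x ^ 2) * n ^ 2 / 4 -
      (1 - x) ^ 3 * n ^ 3 / (4 * (n - d i))) ≤ ∑ i, e i)
  exact ⟨i, hi⟩

open SimpleGraph in
theorem stmt2_general {V : Type*} [Fintype V] (G : SimpleGraph V) (n : ℕ) (x : ℝ)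
    (hn : n = Fintype.card V) (hn1 : 1 ≤ n)
    (hE : (G.edgeSet.ncard : ℝ) = x * n ^ 2 / 2)
    (hdeg : ∀ v : V, (G.neighborSet v).ncard < n) :
    ∃ v : V,
      ((G.induce (G.neighborSet v)).edgeSet.ncard : ℝ) ≥
        ((G.neighborSet v).ncard : ℝ) ^ 2 / 2 + (1 - 4 * x + 3 * x ^ 2) * n ^ 2 / 4 -
          (1 - x) ^ 3 * n ^ 3 / (4 * ((n : ℝ) - ((G.neighborSet v).ncard : ℝ))) := by
  classical
  have hV : Nonempty V := Fintype.card_pos_iff.1 (hn ▸ hn1)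
  have hdegree (v : V) : (G.neighborSet v).ncard = G.degree v := by
    rw [Set.ncard_eq_toFinset_card', ← neighborFinset_def, card_neighborFinset_eq_degree]
  have hedges : (#G.edgeFinset : ℝ) = x * n ^ 2 / 2 := by
    rw [← hE, ← coe_edgeFinset, Set.ncard_coe_finset]
  simp only [hdegree, ge_iff_le] at hdeg ⊢
  refine exists_le_of_sum_sq_sub_le hn.symm (fun v => G.degree v) _ x
    (fun v => by exact_mod_cast hdeg v) ?_ ?_
  · have := congrArg (Nat.cast : ℕ → ℝ) G.sum_degrees_eq_twice_card_edges
    push_cast at this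
    rw [this, hedges]; ring
  · have := (Nat.cast_le (α := ℝ)).2 G.sum_degree_sq_le
    push_cast at this
    rw [← hn, hedges] at this
    linarith

/-- Corollary of Goodman's inequality: a graph `G` with `n ≥ 1` vertices and `x·n²/2` edges
(with all degrees `< n`) has a vertex `v` with
`e(v) ≥ d(v)²/2 + (1−4x+3x²)n²/4 − (1−x)³n³/(4(n−d(v)))`,
where `d(v)` is the degree of `v` and `e(v)` the number of edges inside its neighborhood. -/
theorem stmt2 {V : Type*} [Fintype V] (G : SimpleGraph V) (n : ℕ) (x : ℝ)
    (hn : n = Fintype.card V) (hn1 : 1 ≤ n) (hx0 : 0 ≤ x) (hx1 : x ≤ 1)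
    (hE : (G.edgeSet.ncard : ℝ) = x * n ^ 2 / 2)
    (hdeg : ∀ v : V, (G.neighborSet v).ncard < n) :
    ∃ v : V,
      ((G.induce (G.neighborSet v)).edgeSet.ncard : ℝ) ≥
        ((G.neighborSet v).ncard : ℝ) ^ 2 / 2 + (1 - 4 * x + 3 * x ^ 2) * n ^ 2 / 4 -
          (1 - x) ^ 3 * n ^ 3 / (4 * ((n : ℝ) - ((G.neighborSet v).ncard : ℝ))) :=
  stmt2_general G n x hn hn1 hE hdeg
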